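/- arXiv:1902.01513 — 6 statements merged into one kernel-verified Lean document; each statement's English description precedes it below -/
import Mathlib

section
/- The sum over n ≥ 0 of p·(pq)^n·C_n equals 1, where C_n is the n-th Catalan number, p + q = 1, and 0 < q < 1/2. -/
/-!
With `x = pq`, the Catalan generating function `S = ∑ Cₙ xⁿ` satisfies `x S² + 1 = S`, and
`pq S² - S + 1 = (pS - 1)(qS - 1)`, so `S` is `1/p` or `1/q`. The partial sums of `∑ Cₙ / 4ⁿ`
telescope to `2 - 2 (N + 1) C_N / 4^N`, whence `S ≤ 2 < 1/q`, and therefore `pS = 1`.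
-/

open Finset

theorem succ_succ_mul_catalan_succ (n : ℕ) :
    (n + 2) * catalan (n + 1) = 2 * (2 * n + 1) * catalan n := by
  refine Nat.eq_of_mul_eq_mul_left n.succ_pos ?_
  calc (n + 1) * ((n + 2) * catalan (n + 1))
      = (n + 1) * Nat.centralBinom (n + 1) := by rw [← succ_mul_catalan_eq_centralBinom]
    _ = 2 * (2 * n + 1) * Nat.centralBinom n := Nat.succ_mul_centralBinom_succ n
    _ = (n + 1) * (2 * (2 * n + 1) * catalan n) := by
      rw [← succ_mul_catalan_eq_centralBinom]; ring

theorem catalan_le_four_pow (n : ℕ) : catalan n ≤ 4 ^ n :=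
  calc catalan n ≤ (n + 1) * catalan n := Nat.le_mul_of_pos_left _ n.succ_pos
    _ = Nat.centralBinom n := succ_mul_catalan_eq_centralBinom n
    _ ≤ 4 ^ n := Nat.centralBinom_le_four_pow n

theorem sum_range_catalan_div_four_pow (N : ℕ) :
    ∑ i ∈ range N, (catalan i : ℝ) / 4 ^ i = 2 - 2 * (N + 1) * catalan N / 4 ^ N := by
  induction N with
  | zero => simp
  | succ n ih =>
    have hrec : ((n : ℝ) + 2) * catalan (n + 1) = 2 * (2 * n + 1) * catalan n := by
      exact_mod_cast succ_succ_mul_catalan_succ n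
    rw [sum_range_succ, ih]
    field_simp
    push_cast
    linear_combination (2 * (4 : ℝ) ^ n) * hrec

theorem summable_norm_catalan_mul_pow {x : ℝ} (hx : |x| < 1 / 4) :
    Summable fun n => ‖(catalan n : ℝ) * x ^ n‖ := by
  refine .of_nonneg_of_le (fun n => norm_nonneg _) (fun n => ?_)
    (summable_geometric_of_lt_one (by positivity) (by linarith : 4 * |x| < 1))
  rw [norm_mul, norm_pow, Real.norm_natCast, Real.norm_eq_abs, mul_pow]
  gcongr
  exact_mod_cast catalan_le_four_pow n

theorem tsum_catalan_mul_pow_le_two {x : ℝ} (hx0 : 0 ≤ x) (hx : x ≤ 1 / 4) :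
    ∑' n, (catalan n : ℝ) * x ^ n ≤ 2 := by
  refine Real.tsum_le_of_sum_range_le (fun n => by positivity) fun N => ?_
  calc ∑ i ∈ range N, (catalan i : ℝ) * x ^ i
      ≤ ∑ i ∈ range N, (catalan i : ℝ) / 4 ^ i := by
        gcongr with i
        calc (catalan i : ℝ) * x ^ i ≤ catalan i * (1 / 4) ^ i := by gcongr
          _ = catalan i / 4 ^ i := by rw [one_div_pow, mul_one_div]
    _ = 2 - 2 * (N + 1) * catalan N / 4 ^ N := sum_range_catalan_div_four_pow N
    _ ≤ 2 := sub_le_self _ (by positivity)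

theorem tsum_catalan_mul_pow_sq {x : ℝ} (hx : |x| < 1 / 4) :
    (∑' n, (catalan n : ℝ) * x ^ n) ^ 2 = ∑' n, (catalan (n + 1) : ℝ) * x ^ n := by
  have h := summable_norm_catalan_mul_pow hx
  rw [sq, tsum_mul_tsum_eq_tsum_sum_antidiagonal_of_summable_norm h h]
  congr 1 with n
  rw [catalan_succ', Nat.cast_sum, sum_mul]
  refine sum_congr rfl fun kl hkl => ?_
  rw [← mem_antidiagonal.mp hkl, pow_add]
  push_cast
  ring

theorem tsum_catalan_mul_pow_eq {x : ℝ} (hx : |x| < 1 / 4) :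
    x * (∑' n, (catalan n : ℝ) * x ^ n) ^ 2 + 1 = ∑' n, (catalan n : ℝ) * x ^ n := by
  have hshift : ∑' n, (catalan n : ℝ) * x ^ n =
      1 + ∑' n, (catalan (n + 1) : ℝ) * x ^ (n + 1) := by
    simpa using (summable_norm_catalan_mul_pow hx).of_norm.tsum_eq_zero_add
  rw [tsum_catalan_mul_pow_sq hx, ← tsum_mul_left, hshift, add_comm]
  congr 1
  exact tsum_congr fun n => by ring

theorem selfish_mining_catalan_sum_one (p q : ℝ) (hpq : p + q = 1)
    (hq0 : 0 < q) (hq : q < 1/2) :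
    HasSum (fun n : ℕ => p * (p * q) ^ n * (catalan n : ℝ)) 1 := by
  have hp : 0 < p := by linarith
  have hx0 : 0 ≤ p * q := by positivity
  have hx : p * q < 1 / 4 := by nlinarith [sq_nonneg (p - q)]
  have habs : |p * q| < 1 / 4 := by rwa [abs_of_nonneg hx0]
  set S := ∑' n, (catalan n : ℝ) * (p * q) ^ n
  have hfactor : (p * S - 1) * (q * S - 1) = 0 := by
    linear_combination tsum_catalan_mul_pow_eq habs - S * hpq
  have hqS : q * S < 1 := by
    nlinarith [tsum_catalan_mul_pow_le_two hx0 hx.le]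
  have hpS : p * S = 1 := by
    rcases mul_eq_zero.mp hfactor with h | h <;> linarith
  have hsum := ((summable_norm_catalan_mul_pow habs).of_norm.hasSum).mul_left p
  rw [hpS] at hsum
  have hterm (n : ℕ) : p * (p * q) ^ n * catalan n = p * (catalan n * (p * q) ^ n) := by ring
  simpa only [hterm] using hsum
end

section
/- For 0 ≤ x ≤ 1/4, the power series ∑_{n≥0} C_n x^n converges to (1 − √(1 − 4x))/(2x) for x > 0 (and to 1 at x = 0), where C_n is the n-th Catalan number. -/
open Finset Filter Topology

lemma cb_sq_le (n : ℕ) : Nat.centralBinom n ^ 2 * (n + 1) ≤ 16 ^ n := by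
  induction n with
  | zero => simp [Nat.centralBinom]
  | succ n ih =>
    have h : (n + 1) * Nat.centralBinom (n + 1) = 2 * (2 * n + 1) * Nat.centralBinom n :=
      Nat.succ_mul_centralBinom_succ n
    have key : Nat.centralBinom (n + 1) ^ 2 * (n + 1 + 1) * (n + 1) ^ 2
        = (2 * (2 * n + 1)) ^ 2 * (n + 2) * Nat.centralBinom n ^ 2 := by
      have h2 : ((n + 1) * Nat.centralBinom (n + 1)) ^ 2
          = (2 * (2 * n + 1) * Nat.centralBinom n) ^ 2 := by rw [h]
      ring_nf
      ring_nf at h2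
      nlinarith [h2]
    have poly : (2 * (2 * n + 1)) ^ 2 * (n + 2) ≤ 16 * (n + 1) ^ 3 := by nlinarith
    have step : Nat.centralBinom (n + 1) ^ 2 * (n + 1 + 1) * (n + 1) ^ 3
        ≤ 16 ^ (n + 1) * (n + 1) ^ 3 := by
      calc Nat.centralBinom (n + 1) ^ 2 * (n + 1 + 1) * (n + 1) ^ 3
          = (Nat.centralBinom (n + 1) ^ 2 * (n + 1 + 1) * (n + 1) ^ 2) * (n + 1) := by ring
        _ = (2 * (2 * n + 1)) ^ 2 * (n + 2) * (Nat.centralBinom n ^ 2 * (n + 1)) := by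
            rw [key]; ring
        _ ≤ 16 * (n + 1) ^ 3 * 16 ^ n := Nat.mul_le_mul poly ih
        _ = 16 ^ (n + 1) * (n + 1) ^ 3 := by ring
    exact Nat.le_of_mul_le_mul_right step (by positivity)

lemma cb_tendsto : Tendsto (fun n : ℕ => (Nat.centralBinom n : ℝ) * (1/4) ^ n) atTop (𝓝 0) := by
  have hle : ∀ n : ℕ, (Nat.centralBinom n : ℝ) * (1/4) ^ n ≤ Real.sqrt (1 / ((n : ℝ) + 1)) := by
    intro n
    have hc : ((Nat.centralBinom n : ℝ)) ^ 2 * ((n : ℝ) + 1) ≤ 16 ^ n := by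
      exact_mod_cast cb_sq_le n
    have h16 : (0 : ℝ) < 16 ^ n := by positivity
    have hn1 : (0 : ℝ) < (n : ℝ) + 1 := by positivity
    rw [Real.le_sqrt (by positivity) (by positivity)]
    have e2 : (((1:ℝ)/4) ^ n) ^ 2 = (16 ^ n)⁻¹ := by
      rw [sq, ← mul_pow]
      norm_num
      rw [one_div, inv_pow]
    have e : (((Nat.centralBinom n : ℝ)) * (1/4) ^ n) ^ 2
        = (Nat.centralBinom n : ℝ) ^ 2 / 16 ^ n := by
      rw [mul_pow, e2, ← div_eq_mul_inv]
    rw [e, div_le_div_iff₀ h16 hn1]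
    nlinarith [hc]
  have hlim : Tendsto (fun n : ℕ => Real.sqrt (1 / ((n : ℝ) + 1))) atTop (𝓝 0) := by
    have := tendsto_one_div_add_atTop_nhds_zero_nat.sqrt
    simpa using this
  exact squeeze_zero (fun n => by positivity) hle hlim

lemma catalan_partial_sum (N : ℕ) :
    ∑ k ∈ Finset.range N, (catalan k : ℝ) * (1/4) ^ k
      = 2 - 2 * (Nat.centralBinom N : ℝ) * (1/4) ^ N := by
  induction N with
  | zero => simp [Nat.centralBinom]
  | succ N ih =>
    have h1 : ((N : ℝ) + 1) * (Nat.centralBinom (N + 1) : ℝ)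
        = 2 * (2 * N + 1) * (Nat.centralBinom N : ℝ) := by
      exact_mod_cast Nat.succ_mul_centralBinom_succ N
    have h2 : ((N : ℝ) + 1) * (catalan N : ℝ) = (Nat.centralBinom N : ℝ) := by
      exact_mod_cast succ_mul_catalan_eq_centralBinom N
    have hne : (2 * ((N : ℝ) + 1)) ≠ 0 := by positivity
    have key : (catalan N : ℝ)
        = 2 * (Nat.centralBinom N : ℝ) - (Nat.centralBinom (N + 1) : ℝ) / 2 := by
      apply mul_left_cancel₀ hne
      linear_combination 2 * h2 + h1
    rw [Finset.sum_range_succ, ih, key]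
    push_cast
    ring

lemma hasSum_quarter : HasSum (fun n : ℕ => (catalan n : ℝ) * (1/4) ^ n) 2 := by
  rw [hasSum_iff_tendsto_nat_of_nonneg (fun i => by positivity)]
  have : (fun N => ∑ k ∈ Finset.range N, (catalan k : ℝ) * (1/4) ^ k)
      = fun N => 2 - 2 * (Nat.centralBinom N : ℝ) * (1/4) ^ N := by
    funext N; exact catalan_partial_sum N
  rw [this]
  have h := (cb_tendsto.const_mul 2)
  have h2 : Tendsto (fun N : ℕ => 2 - 2 * ((Nat.centralBinom N : ℝ) * (1/4) ^ N)) atTop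
      (𝓝 (2 - 2 * 0)) := tendsto_const_nhds.sub h
  simpa [mul_assoc] using h2

theorem catalan_generating_series (x : ℝ) (hx0 : 0 ≤ x) (hx : x ≤ 1/4) :
    HasSum (fun n : ℕ => (catalan n : ℝ) * x ^ n)
      (if x = 0 then 1 else (1 - Real.sqrt (1 - 4 * x)) / (2 * x)) := by
  rcases eq_or_lt_of_le hx0 with h0 | h0
  · subst h0
    rw [if_pos rfl]
    have := hasSum_single (f := fun n : ℕ => (catalan n : ℝ) * (0:ℝ) ^ n) 0
      (fun b hb => by simp [zero_pow hb])
    simpa using this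
  · have hxne : x ≠ 0 := ne_of_gt h0
    rw [if_neg hxne]
    have hnonneg : ∀ n, 0 ≤ (catalan n : ℝ) * x ^ n := fun n => by positivity
    have hcomp : ∀ n, (catalan n : ℝ) * x ^ n ≤ (catalan n : ℝ) * (1/4) ^ n := fun n =>
      mul_le_mul_of_nonneg_left (pow_le_pow_left₀ hx0 hx n) (by positivity)
    have hsummable : Summable (fun n => (catalan n : ℝ) * x ^ n) :=
      Summable.of_nonneg_of_le hnonneg hcomp hasSum_quarter.summable
    set f := ∑' n, (catalan n : ℝ) * x ^ n with hfdef
    have hS : HasSum (fun n => (catalan n : ℝ) * x ^ n) f := hsummable.hasSum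
    have hfle : f ≤ 2 := by
      have := Summable.tsum_le_tsum hcomp hsummable hasSum_quarter.summable
      rwa [hasSum_quarter.tsum_eq] at this
    have hnorm : Summable (fun n => ‖(catalan n : ℝ) * x ^ n‖) :=
      hsummable.congr fun n => (Real.norm_of_nonneg (hnonneg n)).symm
    have hmul := hasSum_sum_range_mul_of_summable_norm hnorm hnorm
    rw [← hfdef] at hmul
    have hterm : ∀ n : ℕ, ∑ k ∈ Finset.range (n + 1),
        ((catalan k : ℝ) * x ^ k) * ((catalan (n - k) : ℝ) * x ^ (n - k))
        = (catalan (n + 1) : ℝ) * x ^ n := by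
      intro n
      have e1 : ∀ k ∈ Finset.range (n + 1),
          ((catalan k : ℝ) * x ^ k) * ((catalan (n - k) : ℝ) * x ^ (n - k))
          = ((catalan k * catalan (n - k) : ℕ) : ℝ) * x ^ n := by
        intro k hk
        have hk' : k ≤ n := Nat.lt_succ_iff.mp (Finset.mem_range.mp hk)
        have : x ^ k * x ^ (n - k) = x ^ n := by
          rw [← pow_add, Nat.add_sub_cancel' hk']
        push_cast
        rw [mul_mul_mul_comm, this]
      rw [Finset.sum_congr rfl e1, ← Finset.sum_mul, ← Nat.cast_sum]
      congr 2
      rw [catalan_succ', Finset.Nat.sum_antidiagonal_eq_sum_range_succ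
        (fun i j => catalan i * catalan j)]
    have hsq : HasSum (fun n => (catalan (n + 1) : ℝ) * x ^ n) (f * f) :=
      hmul.congr_fun fun n => (hterm n).symm
    have hshift : HasSum (fun n => (catalan (n + 1) : ℝ) * x ^ (n + 1)) (f - 1) := by
      have := (hasSum_nat_add_iff' (f := fun n => (catalan n : ℝ) * x ^ n) 1).mpr hS
      simpa using this
    have hquad : x * (f * f) = f - 1 := by
      have h1 : HasSum (fun n => x * ((catalan (n + 1) : ℝ) * x ^ n)) (x * (f * f)) :=
        hsq.mul_left x
      have h2 : (fun n => x * ((catalan (n + 1) : ℝ) * x ^ n))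
          = fun n => (catalan (n + 1) : ℝ) * x ^ (n + 1) := by
        funext n; ring
      rw [h2] at h1
      exact h1.unique hshift
    set s := Real.sqrt (1 - 4 * x) with hsdef
    have hs0 : 0 ≤ s := Real.sqrt_nonneg _
    have hs2 : s ^ 2 = 1 - 4 * x := Real.sq_sqrt (by linarith)
    have hfactor : (2 * x * f - (1 - s)) * (2 * x * f - (1 + s)) = 0 := by
      linear_combination (4 * x) * hquad - hs2
    have hgoal : (1 - s) / (2 * x) = f := by
      rcases mul_eq_zero.mp hfactor with hc | hc
      · rw [div_eq_iff (by positivity)]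
        linarith
      · have hsle : s = 0 := by
          have h4 : 2 * x * f = 1 + s := by linarith
          have : s * (1 + s) ≤ 0 := by nlinarith
          nlinarith
        rw [div_eq_iff (by positivity)]
        rw [hsle] at hc ⊢
        linarith
    rw [hgoal]
    exact hS
end

section
/- Define P(1) = p, P(2) = pq + pq², and P(n) = p^{n−1} q^n C_{n−2} for n ≥ 3, where p + q = 1, 0 < q < 1/2, and C_n is the n-th Catalan number. Then ∑_{n≥1} P(n) = 1. -/
/-!
For `n ≥ 0`, `P(n + 3) = p q² · Cₙ₊₁ (pq)ⁿ⁺¹`, so everything reduces to the Catalan generating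
function `C(x) = ∑ Cₙ xⁿ` at `x = pq`. The recurrence `C = 1 + x C²` has the roots `1/p` and `1/q`
there, and the same recurrence bounds the partial sums by `1/p` (since `1 + pq/p² = 1/p`), which
gives convergence and, as `q < p`, excludes the root `1/q`. Hence `C(pq) = 1/p`, and
`p + (pq + pq²) + pq² (1/p - 1) = 1`.
-/

noncomputable def smCycleProb (p q : ℝ) (n : ℕ) : ℝ :=
  if n = 1 then p
  else if n = 2 then p * q + p * q ^ 2
  else p ^ (n - 1) * q ^ n * (catalan (n - 2) : ℝ)

open Finset HasAntidiagonal

theorem sum_range_sum_antidiagonal_mul_le {R : Type*} [CommSemiring R] [PartialOrder R]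
    [IsOrderedRing R] {f g : ℕ → R} (hf : 0 ≤ f) (hg : 0 ≤ g) (N : ℕ) :
    ∑ m ∈ range N, ∑ ij ∈ antidiagonal m, f ij.1 * g ij.2 ≤
      (∑ m ∈ range N, f m) * ∑ m ∈ range N, g m := by
  have hinj : Set.InjOn Sigma.snd ((range N).sigma antidiagonal : Set ((_ : ℕ) × ℕ × ℕ)) := by
    rintro ⟨m, ij⟩ hm ⟨m', ij'⟩ hm' (rfl : ij = ij')
    simp only [coe_sigma, Set.mem_sigma_iff, mem_coe, HasAntidiagonal.mem_antidiagonal] at hm hm'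
    rw [← hm.2, ← hm'.2]
  have hsub : ((range N).sigma antidiagonal).image Sigma.snd ⊆ range N ×ˢ range N := by
    intro ij hij
    simp only [mem_image, mem_sigma, mem_range, HasAntidiagonal.mem_antidiagonal] at hij
    obtain ⟨⟨m, ij⟩, ⟨hm, hij⟩, rfl⟩ := hij
    dsimp only at hm hij ⊢
    simp only [mem_product, mem_range]
    omega
  calc ∑ m ∈ range N, ∑ ij ∈ antidiagonal m, f ij.1 * g ij.2
      = ∑ ij ∈ ((range N).sigma antidiagonal).image Sigma.snd, f ij.1 * g ij.2 := by
        rw [sum_image hinj, sum_sigma]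
    _ ≤ ∑ ij ∈ range N ×ˢ range N, f ij.1 * g ij.2 :=
        sum_le_sum_of_subset_of_nonneg hsub fun ij _ _ => mul_nonneg (hf _) (hg _)
    _ = (∑ m ∈ range N, f m) * ∑ m ∈ range N, g m := by
        rw [sum_product, sum_mul_sum]

theorem catalan_succ_mul_pow {R : Type*} [CommSemiring R] (x : R) (n : ℕ) :
    (catalan (n + 1) : R) * x ^ n =
      ∑ ij ∈ antidiagonal n, (catalan ij.1 * x ^ ij.1) * (catalan ij.2 * x ^ ij.2) := by
  rw [catalan_succ', Nat.cast_sum, sum_mul]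
  refine sum_congr rfl fun ij hij => ?_
  rw [← mem_antidiagonal.mp hij, pow_add]
  push_cast
  ring

theorem sum_range_catalan_mul_pow_le {p q : ℝ} (hpq : p + q = 1) (hp : 0 < p) (hq : 0 ≤ q)
    (N : ℕ) : ∑ n ∈ range N, (catalan n : ℝ) * (p * q) ^ n ≤ p⁻¹ := by
  induction N with
  | zero => simpa using hp.le
  | succ N ih =>
    calc ∑ n ∈ range (N + 1), (catalan n : ℝ) * (p * q) ^ n
        = p * q * ∑ m ∈ range N, ∑ ij ∈ antidiagonal m,
            (catalan ij.1 * (p * q) ^ ij.1) * (catalan ij.2 * (p * q) ^ ij.2) + 1 := by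
          rw [sum_range_succ', mul_sum]
          congr 1
          · refine sum_congr rfl fun n _ => ?_
            rw [pow_succ', mul_left_comm, catalan_succ_mul_pow]
          · simp
      _ ≤ p * q * (p⁻¹ * p⁻¹) + 1 := by
          gcongr
          refine (sum_range_sum_antidiagonal_mul_le (fun n => ?_) (fun n => ?_) N).trans
            (mul_le_mul ih ih (sum_nonneg fun n _ => ?_) (by positivity)) <;> positivity
      _ = p⁻¹ := by
          field_simp
          linarith

theorem tsum_catalan_mul_pow_eq_one_add_mul_sq {R : Type*} [NormedCommRing R] [CompleteSpace R]
    {x : R} (h : Summable fun n => ‖(catalan n : R) * x ^ n‖) :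
    ∑' n, (catalan n : R) * x ^ n = 1 + x * (∑' n, (catalan n : R) * x ^ n) ^ 2 := by
  rw [sq, tsum_mul_tsum_eq_tsum_sum_antidiagonal_of_summable_norm h h,
    ← (summable_norm_sum_mul_antidiagonal_of_summable_norm h h).of_norm.tsum_mul_left,
    h.of_norm.tsum_eq_zero_add]
  simp only [catalan_zero, Nat.cast_one, pow_zero, mul_one, pow_succ', mul_left_comm _ x,
    catalan_succ_mul_pow]

theorem hasSum_catalan_mul_pow {p q : ℝ} (hpq : p + q = 1) (hq : 0 ≤ q) (hqp : q < p) :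
    HasSum (fun n => (catalan n : ℝ) * (p * q) ^ n) p⁻¹ := by
  have hp : 0 < p := hq.trans_lt hqp
  have hnonneg : ∀ n, 0 ≤ (catalan n : ℝ) * (p * q) ^ n := fun n => by positivity
  have hbound := sum_range_catalan_mul_pow_le hpq hp hq
  have hsum : Summable fun n => (catalan n : ℝ) * (p * q) ^ n :=
    summable_of_sum_range_le hnonneg hbound
  set S := ∑' n, (catalan n : ℝ) * (p * q) ^ n
  have hle : S ≤ p⁻¹ := Real.tsum_le_of_sum_range_le hnonneg hbound
  have hquad : S = 1 + p * q * S ^ 2 := tsum_catalan_mul_pow_eq_one_add_mul_sq hsum.norm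
  have hroots : (p * S - 1) * (q * S - 1) = 0 := by linear_combination -hquad - S * hpq
  have hqS : q * S < 1 := calc
    q * S ≤ q * p⁻¹ := mul_le_mul_of_nonneg_left hle hq
    _ < 1 := by rwa [← div_eq_mul_inv, div_lt_one hp]
  have hpS : p * S = 1 := by
    linarith [(mul_eq_zero.mp hroots).resolve_right (sub_ne_zero.mpr hqS.ne)]
  rw [← eq_inv_of_mul_eq_one_right hpS]
  exact hsum.hasSum

theorem smCycleProb_add_three (p q : ℝ) (n : ℕ) :
    smCycleProb p q (n + 3) = p * q ^ 2 * ((catalan (n + 1) : ℝ) * (p * q) ^ (n + 1)) := by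
  rw [smCycleProb, if_neg (by omega), if_neg (by omega), Nat.add_sub_assoc (by norm_num),
    Nat.add_sub_assoc (by norm_num)]
  ring

theorem smCycleProb_sum_one (p q : ℝ) (hpq : p + q = 1)
    (hq0 : 0 < q) (hq : q < 1/2) :
    HasSum (fun n : ℕ => smCycleProb p q (n + 1)) 1 := by
  have hp : p ≠ 0 := by linarith
  have htail : HasSum (fun n => smCycleProb p q (n + 2 + 1)) (p * q ^ 2 * (p⁻¹ - 1)) := by
    have hcat := hasSum_catalan_mul_pow hpq hq0.le (by linarith)
    simpa [smCycleProb_add_three] using ((hasSum_nat_add_iff' 1).2 hcat).mul_left (p * q ^ 2)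
  have hhead : ∑ i ∈ range 2, smCycleProb p q (i + 1) = 1 - p * q ^ 2 * (p⁻¹ - 1) := by
    norm_num [sum_range_succ, smCycleProb]
    rw [mul_sub, mul_right_comm, mul_inv_cancel₀ hp]
    linear_combination (1 + q) * hpq
  refine (hasSum_nat_add_iff' 2).1 ?_
  rwa [hhead, sub_sub_cancel]
end

section
/- With the selfish-mining cycle-length distribution P(1) = p, P(2) = pq + pq², P(n) = p^{n−1} q^n C_{n−2} for n ≥ 3 (p + q = 1, 0 < q < 1/2), the expectation ∑_{n≥1} n·P(n) equals 1 + p²q/(p − q). -/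
/-!
Write `x = p q`, `Cₙ` for the Catalan and `Bₙ` for the central binomial numbers. For `4 x < 1` the
series `S = ∑ Cₙ xⁿ` and `U = ∑ Bₙ xⁿ` converge, and Cauchy products turn Segner's recurrence into
`x S² + 1 = S` and the convolution `2 ∑_{i+j=n} Cᵢ Bⱼ = Bₙ₊₁` into `2 x S U + 1 = U`. At `x = p q`
this gives `S = 1/p` and `U = 1/(p - q)`. Since `(n + 2) Cₙ = Bₙ + Cₙ`, we have
`(n + 2) P(n + 2) = q (Bₙ + Cₙ) xⁿ⁺¹`, plus `2 p q` when `n = 0`, so the expectation is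
`p + 2 p q + q x (U + S) = 1 + p² q / (p - q)`.
-/

open Finset

theorem catalan_le_centralBinom (n : ℕ) : catalan n ≤ n.centralBinom := by
  rw [← succ_mul_catalan_eq_centralBinom]
  exact Nat.le_mul_of_pos_left _ n.succ_pos

/-- Symmetrize with `(i, j) ↦ (j, i)`: the pair sums to `(i + 1 + (j + 1)) Cᵢ Cⱼ = (n + 2) Cᵢ Cⱼ`,
and Segner's recurrence sums `Cᵢ Cⱼ` to `Cₙ₊₁`. -/
theorem two_mul_sum_antidiagonal_catalan_mul_centralBinom (n : ℕ) :
    2 * ∑ ij ∈ antidiagonal n, catalan ij.1 * ij.2.centralBinom = (n + 1).centralBinom := by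
  have hpair : ∀ ij ∈ antidiagonal n,
      catalan ij.1 * ij.2.centralBinom + catalan ij.2 * ij.1.centralBinom
        = (n + 2) * (catalan ij.1 * catalan ij.2) := by
    intro ij hij
    rw [← succ_mul_catalan_eq_centralBinom, ← succ_mul_catalan_eq_centralBinom,
      ← mem_antidiagonal.mp hij]
    ring
  calc 2 * ∑ ij ∈ antidiagonal n, catalan ij.1 * ij.2.centralBinom
      = ∑ ij ∈ antidiagonal n,
          (catalan ij.1 * ij.2.centralBinom + catalan ij.2 * ij.1.centralBinom) := by
        rw [sum_add_distrib, Nat.sum_antidiagonal_swap.symm]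
        simp only [Prod.fst_swap, Prod.snd_swap]
        ring
    _ = (n + 2) * catalan (n + 1) := by rw [sum_congr rfl hpair, ← mul_sum, catalan_succ']
    _ = (n + 1).centralBinom := succ_mul_catalan_eq_centralBinom (n + 1)

theorem tsum_mul_pow_mul_tsum_mul_pow {R : Type*} [NormedCommRing R] [CompleteSpace R]
    {a b : ℕ → R} {x : R}
    (ha : Summable fun n => ‖a n * x ^ n‖) (hb : Summable fun n => ‖b n * x ^ n‖) :
    (∑' n, a n * x ^ n) * ∑' n, b n * x ^ n
      = ∑' n, (∑ ij ∈ antidiagonal n, a ij.1 * b ij.2) * x ^ n := by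
  rw [tsum_mul_tsum_eq_tsum_sum_antidiagonal_of_summable_norm ha hb]
  refine tsum_congr fun n => ?_
  rw [sum_mul]
  refine sum_congr rfl fun ij hij => ?_
  rw [← mem_antidiagonal.mp hij, pow_add]
  ring

section GeneratingFunctions

variable {x : ℝ}

theorem summable_centralBinom_mul_pow (hx0 : 0 ≤ x) (hx : 4 * x < 1) :
    Summable fun n => (n.centralBinom : ℝ) * x ^ n :=
  (summable_geometric_of_lt_one (by positivity) hx).of_nonneg_of_le (fun n => by positivity)
    fun n => by
      rw [mul_pow]
      gcongr
      exact_mod_cast Nat.centralBinom_le_four_pow n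

theorem summable_catalan_mul_pow (hx0 : 0 ≤ x) (hx : 4 * x < 1) :
    Summable fun n => (catalan n : ℝ) * x ^ n :=
  (summable_centralBinom_mul_pow hx0 hx).of_nonneg_of_le (fun n => by positivity)
    fun n => by
      gcongr
      exact_mod_cast catalan_le_centralBinom n

theorem catalan_tsum_sq_mul_add_one (hx0 : 0 ≤ x) (hx : 4 * x < 1) :
    x * (∑' n, (catalan n : ℝ) * x ^ n) ^ 2 + 1 = ∑' n, (catalan n : ℝ) * x ^ n := by
  have hS := summable_catalan_mul_pow hx0 hx
  rw [sq, tsum_mul_pow_mul_tsum_mul_pow hS.norm hS.norm, hS.tsum_eq_zero_add, ← tsum_mul_left]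
  simp only [catalan_zero, catalan_succ', Nat.cast_sum, Nat.cast_mul, Nat.cast_one, pow_zero,
    mul_one]
  rw [add_comm]
  congr 1
  exact tsum_congr fun n => by ring

theorem two_mul_catalan_tsum_mul_centralBinom_tsum_add_one (hx0 : 0 ≤ x) (hx : 4 * x < 1) :
    2 * x * (∑' n, (catalan n : ℝ) * x ^ n) * (∑' n, (n.centralBinom : ℝ) * x ^ n) + 1
      = ∑' n, (n.centralBinom : ℝ) * x ^ n := by
  have hS := summable_catalan_mul_pow hx0 hx
  have hU := summable_centralBinom_mul_pow hx0 hx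
  rw [mul_assoc, tsum_mul_pow_mul_tsum_mul_pow hS.norm hU.norm, hU.tsum_eq_zero_add,
    ← tsum_mul_left]
  simp only [Nat.centralBinom_zero, ← two_mul_sum_antidiagonal_catalan_mul_centralBinom,
    Nat.cast_mul, Nat.cast_sum, Nat.cast_ofNat, Nat.cast_one, pow_zero, mul_one]
  rw [add_comm]
  congr 1
  exact tsum_congr fun n => by ring

end GeneratingFunctions

section Evaluation

variable {p q : ℝ}

theorem mul_nonneg_of_nonneg_of_lt (hq0 : 0 ≤ q) (hqp : q < p) : 0 ≤ p * q := by nlinarith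

theorem four_mul_mul_lt_one_of_add_eq_one (hpq : p + q = 1) (hqp : q < p) : 4 * (p * q) < 1 := by
  nlinarith

/-- `p⁻¹` and `q⁻¹` are both roots of `p q S² + 1 = S`; the second is excluded because
`∑ Bₙ (p q)ⁿ ≥ 0` forces `1 - 2 p q S > 0`. -/
theorem tsum_catalan_mul_pow_mul (hpq : p + q = 1) (hq0 : 0 ≤ q) (hqp : q < p) :
    ∑' n, (catalan n : ℝ) * (p * q) ^ n = p⁻¹ := by
  have hx0 := mul_nonneg_of_nonneg_of_lt hq0 hqp
  have hx := four_mul_mul_lt_one_of_add_eq_one hpq hqp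
  have hS := catalan_tsum_sq_mul_add_one hx0 hx
  have hU := two_mul_catalan_tsum_mul_centralBinom_tsum_add_one hx0 hx
  set S := ∑' n, (catalan n : ℝ) * (p * q) ^ n
  set U := ∑' n, (n.centralBinom : ℝ) * (p * q) ^ n
  have hU0 : 0 ≤ U := tsum_nonneg fun n => by positivity
  have hroots : (p * S - 1) * (q * S - 1) = 0 := by linear_combination hS - S * hpq
  have hpos : 0 < 1 - 2 * (p * q) * S := by
    have : U * (1 - 2 * (p * q) * S) = 1 := by linear_combination -hU
    by_contra!
    nlinarith
  rcases mul_eq_zero.mp hroots with h | h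
  · exact eq_inv_of_mul_eq_one_right (by linear_combination h)
  · nlinarith

theorem tsum_centralBinom_mul_pow_mul (hpq : p + q = 1) (hq0 : 0 ≤ q) (hqp : q < p) :
    ∑' n, (n.centralBinom : ℝ) * (p * q) ^ n = (p - q)⁻¹ := by
  have hU := two_mul_catalan_tsum_mul_centralBinom_tsum_add_one
    (mul_nonneg_of_nonneg_of_lt hq0 hqp) (four_mul_mul_lt_one_of_add_eq_one hpq hqp)
  rw [tsum_catalan_mul_pow_mul hpq hq0 hqp] at hU
  set U := ∑' n, (n.centralBinom : ℝ) * (p * q) ^ n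
  have hp : p ≠ 0 := by linarith
  refine eq_inv_of_mul_eq_one_right ?_
  field_simp at hU
  linear_combination -hU + U * hpq

theorem hasSum_catalan_mul_pow_mul (hpq : p + q = 1) (hq0 : 0 ≤ q) (hqp : q < p) :
    HasSum (fun n => (catalan n : ℝ) * (p * q) ^ n) p⁻¹ :=
  (summable_catalan_mul_pow (mul_nonneg_of_nonneg_of_lt hq0 hqp)
    (four_mul_mul_lt_one_of_add_eq_one hpq hqp)).hasSum_iff.mpr
    (tsum_catalan_mul_pow_mul hpq hq0 hqp)

theorem hasSum_centralBinom_mul_pow_mul (hpq : p + q = 1) (hq0 : 0 ≤ q) (hqp : q < p) :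
    HasSum (fun n => (n.centralBinom : ℝ) * (p * q) ^ n) (p - q)⁻¹ :=
  (summable_centralBinom_mul_pow (mul_nonneg_of_nonneg_of_lt hq0 hqp)
    (four_mul_mul_lt_one_of_add_eq_one hpq hqp)).hasSum_iff.mpr
    (tsum_centralBinom_mul_pow_mul hpq hq0 hqp)

end Evaluation

theorem two_add_mul_smCycleProb_two_add (p q : ℝ) (n : ℕ) :
    ((n : ℝ) + 2) * smCycleProb p q (n + 2)
      = q * (((n.centralBinom : ℝ) + catalan n) * (p * q) ^ (n + 1))
        + if n = 0 then 2 * p * q else 0 := by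
  rcases n with _ | n
  · simp only [smCycleProb, CharP.cast_eq_zero, zero_add, OfNat.ofNat_ne_one, ↓reduceIte,
      Nat.centralBinom_zero, Nat.cast_one, catalan_zero, pow_one]
    ring
  · have h : ((n : ℝ) + 1 + 1) * catalan (n + 1) = (n + 1).centralBinom := by
      exact_mod_cast succ_mul_catalan_eq_centralBinom (n + 1)
    rw [smCycleProb, if_neg (by omega), if_neg (by omega), show n + 1 + 2 - 1 = n + 2 by omega,
      show n + 1 + 2 - 2 = n + 1 by omega, if_neg n.succ_ne_zero]
    push_cast
    linear_combination p ^ (n + 2) * q ^ (n + 3) * h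

theorem smCycleProb_expectation (p q : ℝ) (hpq : p + q = 1)
    (hq0 : 0 < q) (hq : q < 1/2) :
    HasSum (fun n : ℕ => ((n : ℝ) + 1) * smCycleProb p q (n + 1))
      (1 + p ^ 2 * q / (p - q)) := by
  have hqp : q < p := by linarith
  have htail : HasSum (fun n : ℕ => ((n : ℝ) + 2) * smCycleProb p q (n + 2))
      (q * (p * q) * ((p - q)⁻¹ + p⁻¹) + 2 * p * q) :=
    ((((hasSum_centralBinom_mul_pow_mul hpq hq0.le hqp).add
      (hasSum_catalan_mul_pow_mul hpq hq0.le hqp)).mul_left (q * (p * q))).add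
      (hasSum_ite_eq 0 (2 * p * q))).congr_fun fun n => by
        rw [two_add_mul_smCycleProb_two_add]
        ring
  have hvalue :
      1 + p ^ 2 * q / (p - q) - ∑ i ∈ range 1, ((i : ℝ) + 1) * smCycleProb p q (i + 1) =
        q * (p * q) * ((p - q)⁻¹ + p⁻¹) + 2 * p * q := by
    have hp : p ≠ 0 := by linarith
    have hpq' : p - q ≠ 0 := by linarith
    simp only [range_one, sum_singleton, smCycleProb, CharP.cast_eq_zero, zero_add, one_mul,
      if_pos]
    field_simp
    linear_combination (q + q ^ 2 - (1 + q) * p) * hpq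
  refine (hasSum_nat_add_iff' 1).mp ?_
  rw [hvalue]
  exact htail.congr_fun fun n => by
    push_cast
    ring
end

section
/- For the Equal-Fork Stubborn Mining strategy with cycle-length distribution P[L = n+1] = p(pq)^n C_n for n ≥ 0 (p + q = 1, 0 < q < 1/2), the expectation E[L] = ∑_{n≥0} (n+1) p (pq)^n C_n equals p/(p − q). -/
open Finset

noncomputable def cbR (n : ℕ) : ℝ := (Nat.centralBinom n : ℝ)

lemma cbR_le (n : ℕ) : cbR n ≤ 4 ^ n := by
  have h1 : Nat.centralBinom n ≤ (2 * n + 1).choose n :=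
    Nat.choose_le_choose n (by omega)
  have h2 : (2 * n + 1).choose n ≤ 4 ^ n := Nat.choose_middle_le_pow n
  have := h1.trans h2
  unfold cbR
  exact_mod_cast this

lemma cbR_nonneg' (n : ℕ) : 0 ≤ cbR n := by unfold cbR; positivity

lemma cbR_nonneg (n : ℕ) : 0 ≤ cbR n := by unfold cbR; positivity

lemma cbR_rec (k : ℕ) : ((k : ℝ) + 1) * cbR (k + 1) = 2 * (2 * k + 1) * cbR k := by
  have h := Nat.succ_mul_centralBinom_succ k
  have h' := congrArg (fun m : ℕ => (m : ℝ)) h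
  push_cast at h'
  unfold cbR
  linarith

/-- Symmetry: `2 ∑ k·c_k·c_{m-k} = m ∑ c_k c_{m-k}`. -/
lemma cbR_symm (m : ℕ) :
    2 * ∑ k ∈ range (m + 1), (k : ℝ) * (cbR k * cbR (m - k))
      = m * ∑ k ∈ range (m + 1), cbR k * cbR (m - k) := by
  have h3 : ∑ j ∈ range (m + 1), ((m : ℝ) - j) * (cbR j * cbR (m - j))
      = ∑ j ∈ range (m + 1), (j : ℝ) * (cbR j * cbR (m - j)) := by
    have h := Finset.sum_range_reflect (fun k => (k : ℝ) * (cbR k * cbR (m - k))) (m + 1)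
    rw [← h]
    apply Finset.sum_congr rfl
    intro j hj
    have hjm : j ≤ m := by simpa [Nat.lt_succ_iff] using hj
    have e1 : m + 1 - 1 - j = m - j := by omega
    have e2 : m - (m - j) = j := by omega
    rw [e1, e2, Nat.cast_sub hjm]
    ring
  have expand : ∑ j ∈ range (m + 1), ((m : ℝ) - j) * (cbR j * cbR (m - j))
      = m * ∑ k ∈ range (m + 1), cbR k * cbR (m - k)
        - ∑ j ∈ range (m + 1), (j : ℝ) * (cbR j * cbR (m - j)) := by
    rw [Finset.mul_sum, ← Finset.sum_sub_distrib]
    apply Finset.sum_congr rfl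
    intro j _
    ring
  linarith [h3, expand]

lemma cbR_conv (n : ℕ) : ∑ k ∈ range (n + 1), cbR k * cbR (n - k) = 4 ^ n := by
  induction n with
  | zero => simp [cbR, Nat.centralBinom]
  | succ n ih =>
      set S := ∑ k ∈ range (n + 1), cbR k * cbR (n - k) with hS
      -- step 1: (n+1) * S_{n+1} = 2 * ∑ k c_k c_{n+1-k}
      have key1 : ((n : ℝ) + 1) * ∑ k ∈ range (n + 2), cbR k * cbR (n + 1 - k)
          = 2 * ∑ k ∈ range (n + 2), (k : ℝ) * (cbR k * cbR (n + 1 - k)) := by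
        have := cbR_symm (n + 1)
        push_cast at this
        rw [this]
      -- step 2: shift index using recurrence
      have key2 : ∑ k ∈ range (n + 2), (k : ℝ) * (cbR k * cbR (n + 1 - k))
          = ∑ i ∈ range (n + 1), 2 * (2 * (i : ℝ) + 1) * (cbR i * cbR (n - i)) := by
        rw [Finset.sum_range_succ']
        simp only [Nat.cast_zero, zero_mul, add_zero]
        apply Finset.sum_congr rfl
        intro i _
        have hrec := cbR_rec i
        have hsub : n + 1 - (i + 1) = n - i := by omega
        rw [hsub]
        push_cast
        linear_combination cbR (n - i) * hrec
      -- step 3: evaluate using symmetry at level n and ih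
      have key3 : ∑ i ∈ range (n + 1), 2 * (2 * (i : ℝ) + 1) * (cbR i * cbR (n - i))
          = 2 * (2 * ∑ i ∈ range (n + 1), (i : ℝ) * (cbR i * cbR (n - i)) + S) := by
        have e : ∀ i : ℕ, 2 * (2 * (i : ℝ) + 1) * (cbR i * cbR (n - i))
            = 4 * ((i : ℝ) * (cbR i * cbR (n - i))) + 2 * (cbR i * cbR (n - i)) := by
          intro i; ring
        rw [hS, Finset.sum_congr rfl (fun i _ => e i), Finset.sum_add_distrib,
          ← Finset.mul_sum, ← Finset.mul_sum]
        ring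
      have hsymn := cbR_symm n
      have : ((n : ℝ) + 1) * ∑ k ∈ range (n + 2), cbR k * cbR (n + 1 - k)
          = ((n : ℝ) + 1) * 4 ^ (n + 1) := by
        rw [key1, key2, key3, ← hS] at *
        rw [ih] at hsymn ⊢
        rw [pow_succ]
        nlinarith [hsymn]
      have hn1 : ((n : ℝ) + 1) ≠ 0 := by positivity
      have := mul_left_cancel₀ hn1 this
      simpa using this

theorem efsm_expected_cycle_length (p q : ℝ) (hpq : p + q = 1)
    (hq0 : 0 < q) (hq : q < 1/2) :
    HasSum (fun n : ℕ => ((n : ℝ) + 1) * p * (p * q) ^ n * (catalan n : ℝ))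
      (p / (p - q)) := by
  have hp : p = 1 - q := by linarith
  have hp0 : 0 < p := by linarith
  have hpq' : 0 < p - q := by linarith
  set x : ℝ := p * q with hx
  have hx0 : 0 < x := mul_pos hp0 hq0
  have h4x : 1 - 4 * x = (p - q) ^ 2 := by rw [hx]; nlinarith [hpq]
  have h4x1 : 4 * x < 1 := by nlinarith [sq_nonneg (p - q), hpq']
  -- the series g n = centralBinom n * x^n
  set g : ℕ → ℝ := fun n => cbR n * x ^ n with hg
  have hgnorm : Summable fun n => ‖g n‖ := by
    apply Summable.of_nonneg_of_le (fun n => norm_nonneg _) (fun n => ?_)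
      (summable_geometric_of_lt_one (by linarith) (by linarith) :
        Summable fun n : ℕ => (4 * x) ^ n)
    have hgn : 0 ≤ g n := mul_nonneg (cbR_nonneg n) (pow_nonneg hx0.le n)
    have : ‖g n‖ = cbR n * x ^ n := by
      rw [Real.norm_eq_abs, abs_of_nonneg hgn]
    rw [this]
    have h4 : (4 * x) ^ n = 4 ^ n * x ^ n := mul_pow 4 x n
    rw [h4]
    exact mul_le_mul_of_nonneg_right (cbR_le n) (pow_nonneg hx0.le n)
  have hgsum : Summable g := hgnorm.of_norm
  set U : ℝ := ∑' n, g n with hU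
  have hUhs : HasSum g U := hgsum.hasSum
  -- Cauchy product
  have cauchy : U * U = ∑' n : ℕ, ∑ k ∈ range (n + 1), g k * g (n - k) :=
    tsum_mul_tsum_eq_tsum_sum_range_of_summable_norm hgnorm hgnorm
  have conv_eval : ∀ n : ℕ, ∑ k ∈ range (n + 1), g k * g (n - k) = (4 * x) ^ n := by
    intro n
    have : ∑ k ∈ range (n + 1), g k * g (n - k)
        = ∑ k ∈ range (n + 1), cbR k * cbR (n - k) * x ^ n := by
      apply Finset.sum_congr rfl
      intro k hk
      have hkn : k ≤ n := by simpa [Nat.lt_succ_iff] using hk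
      simp only [hg]
      rw [show x ^ n = x ^ k * x ^ (n - k) by rw [← pow_add]; congr 1; omega]
      ring
    rw [this, ← Finset.sum_mul, cbR_conv, ← mul_pow]
  have geom : ∑' n : ℕ, (4 * x) ^ n = (1 - 4 * x)⁻¹ :=
    tsum_geometric_of_lt_one (by linarith) (by linarith)
  have hU2 : U * U = ((p - q) ^ 2)⁻¹ := by
    rw [cauchy, tsum_congr conv_eval, geom, h4x]
  -- U positive
  have hUpos : 0 < U := by
    have h0 : g 0 ≤ U := le_hasSum hUhs 0 (fun i _ =>
      mul_nonneg (cbR_nonneg i) (pow_nonneg hx0.le i))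
    have : g 0 = 1 := by simp [hg, cbR, Nat.centralBinom]
    linarith
  have hUval : U = (p - q)⁻¹ := by
    have hfac : (U - (p - q)⁻¹) * (U + (p - q)⁻¹) = 0 := by
      have h1 : U * U - ((p - q)⁻¹) * ((p - q)⁻¹) = 0 := by
        rw [hU2, ← mul_inv]; ring
      nlinarith [h1]
    rcases mul_eq_zero.1 hfac with h | h
    · linarith
    · exfalso
      have : 0 < (p - q)⁻¹ := by positivity
      linarith
  -- conclude
  have hfinal : HasSum (fun n => p * g n) (p * U) := hUhs.mul_left p
  have heq : (fun n : ℕ => ((n : ℝ) + 1) * p * (p * q) ^ n * (catalan n : ℝ))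
      = fun n => p * g n := by
    funext n
    have hc : ((n : ℝ) + 1) * (catalan n : ℝ) = cbR n := by
      have h := succ_mul_catalan_eq_centralBinom n
      have h' := congrArg (fun m : ℕ => (m : ℝ)) h
      push_cast at h'
      unfold cbR
      linarith
    simp only [hg, ← hx]
    linear_combination p * x ^ n * hc
  rw [hUval] at hfinal
  rw [heq, div_eq_mul_inv]
  exact hfinal
end

section
/- Let 0 < γ ≤ 1 and p + q = 1 with 0 < q < 1/2. Then ∑_{n≥0} p(pq)^n C_n · (n + 1 − (1 − (1−γ)^{n+1})/γ) = q/(p−q) − ((1−γ)/γ)·(1 − p·C((1−γ)pq)), where C(x) = (1 − √(1−4x))/(2x). -/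
/-- The generating function of the Catalan numbers. -/
noncomputable def catalanGF (x : ℝ) : ℝ := (1 - Real.sqrt (1 - 4 * x)) / (2 * x)

/-! Both series are binomial series in `y = -4x`: the coefficients of `(1 + y) ^ (-1/2)` are
`centralBinom n = (n + 1) * catalan n` and those of `(1 + y) ^ (1/2)` are `-2 * catalan (n - 1)`
for `n ≥ 1`, so `∑ (n + 1) Cₙ xⁿ = 1 / √(1 - 4x)` and `∑ Cₙ xⁿ⁺¹ = (1 - √(1 - 4x)) / 2` for `|x| < 1/4`.
At `x = pq` one has `√(1 - 4pq) = p - q`, and the summand splits as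
`p (n + 1) Cₙ (pq)ⁿ - Cₙ (pq)ⁿ⁺¹ / (qγ) + Cₙ ((1 - γ) pq)ⁿ⁺¹ / (qγ)`. -/

theorem Ring.succ_nsmul_choose_succ_eq_choose_mul_sub {R : Type*} [Ring R] [BinomialRing R]
    (r : R) (n : ℕ) : (n + 1) • Ring.choose r (n + 1) = Ring.choose r n * (r - n) := by
  simpa [Ring.choose_one_right] using Ring.choose_smul_choose r (Nat.le_succ n)

theorem Ring.succ_nsmul_choose_succ_eq_mul_choose_sub_one {R : Type*} [Ring R] [BinomialRing R]
    (r : R) (n : ℕ) : (n + 1) • Ring.choose r (n + 1) = r * Ring.choose (r - 1) n := by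
  simpa [Ring.choose_one_right] using Ring.choose_smul_choose r (Nat.le_add_left 1 n)

theorem Real.hasSum_choose_mul_pow (a : ℝ) {y : ℝ} (hy : |y| < 1) :
    HasSum (fun n => Ring.choose a n * y ^ n) ((1 + y) ^ a) := by
  have hy' : y ∈ Metric.eball 0 1 := by
    rw [Metric.mem_eball, edist_zero_right, enorm_eq_nnnorm, ENNReal.coe_lt_one_iff,
      ← NNReal.coe_lt_one, coe_nnnorm, Real.norm_eq_abs]
    exact hy
  simpa [binomialSeries, FormalMultilinearSeries.ofScalars_apply_eq, mul_comm] using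
    Real.one_add_rpow_hasFPowerSeriesOnBall_zero.hasSum hy'

theorem choose_neg_half_mul_neg_four_pow (n : ℕ) :
    Ring.choose (-1 / 2 : ℝ) n * (-4) ^ n = n.centralBinom := by
  induction n with
  | zero => simp
  | succ n ih =>
    have hrec := Ring.succ_nsmul_choose_succ_eq_choose_mul_sub (-1 / 2 : ℝ) n
    have hcb : ((n : ℝ) + 1) * (n + 1).centralBinom = 2 * (2 * n + 1) * n.centralBinom := by
      exact_mod_cast Nat.succ_mul_centralBinom_succ n
    rw [nsmul_eq_mul] at hrec
    push_cast at hrec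
    apply mul_left_cancel₀ (n.cast_add_one_ne_zero : ((n : ℝ) + 1) ≠ 0)
    rw [hcb, ← ih, pow_succ, ← mul_assoc, ← mul_assoc, hrec]
    ring

theorem choose_half_succ_mul_neg_four_pow (n : ℕ) :
    Ring.choose (1 / 2 : ℝ) (n + 1) * (-4) ^ (n + 1) = -2 * catalan n := by
  have hrec := Ring.succ_nsmul_choose_succ_eq_mul_choose_sub_one (1 / 2 : ℝ) n
  have hcat : ((n : ℝ) + 1) * catalan n = n.centralBinom := by
    exact_mod_cast succ_mul_catalan_eq_centralBinom n
  rw [nsmul_eq_mul] at hrec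
  push_cast at hrec
  apply mul_left_cancel₀ (n.cast_add_one_ne_zero : ((n : ℝ) + 1) ≠ 0)
  rw [← mul_assoc, hrec, show (1 / 2 : ℝ) - 1 = -1 / 2 by norm_num, mul_left_comm, hcat,
    ← choose_neg_half_mul_neg_four_pow, pow_succ]
  ring

theorem hasSum_centralBinom_mul_pow {x : ℝ} (hx : |x| < 1 / 4) :
    HasSum (fun n => (n.centralBinom : ℝ) * x ^ n) (√(1 - 4 * x))⁻¹ := by
  have h := Real.hasSum_choose_mul_pow (-1 / 2) (y := -4 * x) (by rw [abs_mul, abs_neg, Nat.abs_ofNat]; linarith)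
  have h4x : 0 ≤ 1 - 4 * x := by linarith [le_abs_self x]
  rw [Real.sqrt_eq_rpow, ← Real.rpow_neg h4x]
  convert h using 1
  · funext n
    rw [mul_pow, ← mul_assoc, choose_neg_half_mul_neg_four_pow]
  · ring_nf

theorem hasSum_succ_mul_catalan_mul_pow {x : ℝ} (hx : |x| < 1 / 4) :
    HasSum (fun n : ℕ => ((n : ℝ) + 1) * catalan n * x ^ n) (√(1 - 4 * x))⁻¹ := by
  convert hasSum_centralBinom_mul_pow hx using 1
  funext n
  congr 1
  exact_mod_cast succ_mul_catalan_eq_centralBinom n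

theorem hasSum_catalan_mul_pow_succ {x : ℝ} (hx : |x| < 1 / 4) :
    HasSum (fun n => (catalan n : ℝ) * x ^ (n + 1)) ((1 - √(1 - 4 * x)) / 2) := by
  have h := Real.hasSum_choose_mul_pow (1 / 2) (y := -4 * x) (by rw [abs_mul, abs_neg, Nat.abs_ofNat]; linarith)
  rw [← hasSum_nat_add_iff' 1] at h
  have hval : ((1 + -4 * x) ^ (1 / 2 : ℝ) - ∑ i ∈ Finset.range 1,
      Ring.choose (1 / 2 : ℝ) i * (-4 * x) ^ i) * (-1 / 2) = (1 - √(1 - 4 * x)) / 2 := by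
    rw [Real.sqrt_eq_rpow]
    simp only [one_div, Finset.range_one, Finset.sum_singleton, Ring.choose_zero_right',
      pow_zero, mul_one]
    ring_nf
  rw [← hval]
  refine (h.mul_right (-1 / 2)).congr_fun fun n => ?_
  rw [mul_pow, ← mul_assoc, choose_half_succ_mul_neg_four_pow]
  ring

/-- Also at `x = 0`, where both sides vanish because `catalanGF 0 = 0 / 0 = 0`. -/
theorem mul_catalanGF (x : ℝ) : x * catalanGF x = (1 - √(1 - 4 * x)) / 2 := by
  rcases eq_or_ne x 0 with rfl | hx
  · simp
  · rw [catalanGF]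
    field_simp

theorem efsm_expected_revenue (p q γ : ℝ) (hpq : p + q = 1)
    (hq0 : 0 < q) (hq : q < 1/2) (hγ0 : 0 < γ) (hγ1 : γ ≤ 1) :
    HasSum (fun n : ℕ => p * (p * q) ^ n * (catalan n : ℝ) *
        (((n : ℝ) + 1) - (1 - (1 - γ) ^ (n + 1)) / γ))
      (q / (p - q) - ((1 - γ) / γ) * (1 - p * catalanGF ((1 - γ) * p * q))) := by
  have hpq0 : 0 < p * q := mul_pos (by linarith) hq0
  have hpq4 : |p * q| < 1 / 4 := by
    rw [abs_of_pos hpq0]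
    nlinarith
  have hx4 : |(1 - γ) * p * q| < 1 / 4 := by
    rw [mul_assoc, abs_of_nonneg (by nlinarith)]
    nlinarith
  have hsqrt : √(1 - 4 * (p * q)) = p - q := by
    rw [show 1 - 4 * (p * q) = (p - q) ^ 2 by linear_combination (-(p + q + 1)) * hpq,
      Real.sqrt_sq (by linarith)]
  have hsum_succ := hasSum_succ_mul_catalan_mul_pow hpq4
  have hsum_pq := hasSum_catalan_mul_pow_succ hpq4
  rw [hsqrt] at hsum_succ hsum_pq
  rw [show (1 - (p - q)) / 2 = q by linarith] at hsum_pq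
  have hsum_x := hasSum_catalan_mul_pow_succ hx4
  rw [← mul_catalanGF] at hsum_x
  have hpq_ne : p - q ≠ 0 := by linarith
  have hval : q / (p - q) - (1 - γ) / γ * (1 - p * catalanGF ((1 - γ) * p * q)) =
      p * (p - q)⁻¹ - 1 / (q * γ) * q +
        1 / (q * γ) * ((1 - γ) * p * q * catalanGF ((1 - γ) * p * q)) := by
    field_simp
    ring
  rw [hval]
  refine (((hsum_succ.mul_left p).sub (hsum_pq.mul_left _)).add
    (hsum_x.mul_left _)).congr_fun fun n => ?_
  rw [mul_assoc (1 - γ), mul_pow _ (p * q), pow_succ (1 - γ)]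
  field_simp
  ring
end
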